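/- Define Γ_b(τ) = ∫₀^∞ (8ρ²/(ρ²+1)²) · (1 − e^{−τ(1+ρ²)/4})/(τ(1+ρ²)) dρ for τ > 0. Then: (i) lim_{τ→0⁺} Γ_b(τ) = π/2, so Γ_b extends continuously to τ = 0 with a nonzero value; and (ii) Γ_b(τ) ≤ π/(2τ) for all τ > 0, so Γ_b(τ) = O(1/τ) as τ → ∞. -/

import Mathlib

/-!
Write `K(ζ) = (1 - e^{-ζ/4}) / ζ`, so that `Γ_b(τ) = ∫₀^∞ 8ρ²/(1+ρ²)² · K(τ(1+ρ²)) dρ`.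
For `ζ ≥ 0` we have `0 ≤ K(ζ) ≤ 1/4` (from `e^x ≥ 1 + x`) and `K(ζ) ≤ 1/ζ`, and `K(ζ) → 1/4` as
`ζ → 0⁺` since `K` is a difference quotient of `1 - e^{-ζ/4}` at `0`. Dominated convergence, with
dominating function `2ρ²/(1+ρ²)²`, gives `Γ_b(τ) → 2 ∫₀^∞ ρ²/(1+ρ²)² dρ = π/2`, while `K(ζ) ≤ 1/ζ`
gives `Γ_b(τ) ≤ (8/τ) ∫₀^∞ ρ²/(1+ρ²)³ dρ = π/(2τ)`. Both rational integrals are evaluated with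
explicit antiderivatives built from `arctan`.
-/

noncomputable section

open MeasureTheory

/-- The boundary contribution function
`Γ_b(τ) = ∫₀^∞ (8ρ²/(ρ²+1)²) · (1 − e^{−τ(1+ρ²)/4})/(τ(1+ρ²)) dρ`. -/
def Gammab (τ : ℝ) : ℝ :=
  ∫ ρ in Set.Ioi (0 : ℝ),
    (8 * ρ ^ 2 / (ρ ^ 2 + 1) ^ 2) *
      ((1 - Real.exp (-(τ * (1 + ρ ^ 2)) / 4)) / (τ * (1 + ρ ^ 2)))

open Real Filter Set Topology

/-- The kernel `K` of `Γ_b`; `gammabKernel 0 = 0` only by the convention `x / 0 = 0`. -/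
def gammabKernel (s : ℝ) : ℝ := (1 - exp (-s / 4)) / s

lemma Gammab_eq_integral_mul_gammabKernel (τ : ℝ) :
    Gammab τ = ∫ ρ in Ioi 0, 8 * ρ ^ 2 / (ρ ^ 2 + 1) ^ 2 * gammabKernel (τ * (1 + ρ ^ 2)) :=
  rfl

section Kernel

variable {s : ℝ}

@[fun_prop]
lemma measurable_gammabKernel : Measurable gammabKernel := by
  unfold gammabKernel
  fun_prop

lemma gammabKernel_nonneg (hs : 0 ≤ s) : 0 ≤ gammabKernel s :=
  div_nonneg (sub_nonneg.2 (exp_le_one_iff.2 (by linarith))) hs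

lemma gammabKernel_le_quarter (hs : 0 ≤ s) : gammabKernel s ≤ 1 / 4 :=
  div_le_of_le_mul₀ hs (by norm_num) (by linarith [add_one_le_exp (-s / 4)])

lemma gammabKernel_le_inv (hs : 0 ≤ s) : gammabKernel s ≤ s⁻¹ := by
  rw [gammabKernel, div_eq_mul_inv]
  exact mul_le_of_le_one_left (inv_nonneg.2 hs) (by linarith [exp_pos (-s / 4)])

lemma abs_gammabKernel_le_quarter (hs : 0 ≤ s) : |gammabKernel s| ≤ 1 / 4 := by
  rw [abs_of_nonneg (gammabKernel_nonneg hs)]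
  exact gammabKernel_le_quarter hs

lemma tendsto_gammabKernel_nhdsGT_zero : Tendsto gammabKernel (𝓝[>] 0) (𝓝 (1 / 4)) := by
  have hderiv : HasDerivAt (fun s : ℝ => 1 - exp (-s / 4)) (1 / 4) 0 := by
    refine (((hasDerivAt_neg (0 : ℝ)).div_const 4).exp.const_sub 1).congr_deriv ?_
    norm_num
  refine ((hasDerivAt_iff_tendsto_slope.1 hderiv).mono_left (nhdsGT_le_nhdsNE 0)).congr fun s => ?_
  simp [slope_def_field, gammabKernel]

end Kernel

lemma tendsto_mul_const_nhdsGT_zero {c : ℝ} (hc : 0 < c) :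
    Tendsto (· * c) (𝓝[>] (0 : ℝ)) (𝓝[>] 0) :=
  tendsto_nhdsWithin_of_tendsto_nhds_of_eventually_within _
    (((continuous_mul_const c).tendsto' 0 0 (zero_mul c)).mono_left nhdsWithin_le_nhds)
    (eventually_nhdsWithin_of_forall fun _ hτ => mul_pos hτ hc)

section WeightedKernel

variable {α : Type*} [MeasurableSpace α] {μ : Measure α} {w c : α → ℝ}

lemma tendsto_integral_mul_gammabKernel (hw : Integrable w μ) (hc_meas : Measurable c)
    (hc : ∀ x, 0 < c x) :
    Tendsto (fun τ => ∫ x, w x * gammabKernel (τ * c x) ∂μ) (𝓝[>] 0)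
      (𝓝 ((∫ x, w x ∂μ) / 4)) := by
  rw [← integral_div]
  refine tendsto_integral_filter_of_dominated_convergence (fun x => |w x| / 4) ?_ ?_
    (hw.abs.div_const 4) (ae_of_all _ fun x => ?_)
  · exact Eventually.of_forall fun τ =>
      hw.aestronglyMeasurable.mul (by fun_prop : Measurable _).aestronglyMeasurable
  · filter_upwards [self_mem_nhdsWithin] with τ (hτ : 0 < τ)
    refine ae_of_all _ fun x => ?_
    rw [norm_mul, Real.norm_eq_abs, Real.norm_eq_abs, div_eq_mul_one_div]
    exact mul_le_mul_of_nonneg_left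
      (abs_gammabKernel_le_quarter (mul_pos hτ (hc x)).le) (abs_nonneg _)
  · have := (tendsto_gammabKernel_nhdsGT_zero.comp (tendsto_mul_const_nhdsGT_zero (hc x))).const_mul
      (w x)
    rwa [mul_one_div] at this

lemma integral_mul_gammabKernel_le {τ : ℝ} (hτ : 0 ≤ τ) (hw : ∀ x, 0 ≤ w x)
    (hc : ∀ x, 0 ≤ c x) (hint : Integrable (fun x => w x / c x) μ) :
    ∫ x, w x * gammabKernel (τ * c x) ∂μ ≤ τ⁻¹ * ∫ x, w x / c x ∂μ := by
  rw [← integral_const_mul]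
  refine integral_mono_of_nonneg (ae_of_all _ fun x => ?_) (hint.const_mul _)
    (ae_of_all _ fun x => ?_)
  · exact mul_nonneg (hw x) (gammabKernel_nonneg (mul_nonneg hτ (hc x)))
  · calc w x * gammabKernel (τ * c x) ≤ w x * (τ * c x)⁻¹ :=
          mul_le_mul_of_nonneg_left (gammabKernel_le_inv (mul_nonneg hτ (hc x))) (hw x)
      _ = τ⁻¹ * (w x / c x) := by rw [mul_inv]; ring

end WeightedKernel

open Polynomial in
lemma tendsto_div_sq_add_one_atTop : Tendsto (fun x : ℝ => x / (x ^ 2 + 1)) atTop (𝓝 0) := by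
  have hdeg : (X : ℝ[X]).degree < (X ^ 2 + 1 : ℝ[X]).degree := by
    rw [degree_X, show (X ^ 2 + 1 : ℝ[X]).degree = 2 by compute_degree!]
    decide
  simpa using div_tendsto_atTop_zero_of_degree_lt _ _ hdeg

open Polynomial in
lemma tendsto_cube_sub_div_sq_add_one_sq_atTop :
    Tendsto (fun x : ℝ => (x ^ 3 - x) / (8 * (x ^ 2 + 1) ^ 2)) atTop (𝓝 0) := by
  have hdeg : (X ^ 3 - X : ℝ[X]).degree < (C 8 * (X ^ 2 + 1) ^ 2 : ℝ[X]).degree := by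
    compute_degree!
    rw [show (X ^ 2 + 1 : ℝ[X]).degree = 2 by compute_degree!]
    decide
  simpa using div_tendsto_atTop_zero_of_degree_lt _ _ hdeg

lemma hasDerivAt_sq_add_one (x : ℝ) : HasDerivAt (fun x : ℝ => x ^ 2 + 1) (2 * x) x := by
  simpa using (hasDerivAt_pow 2 x).add_const 1

lemma hasDerivAt_antideriv_sq_div_sq_add_one_sq (x : ℝ) :
    HasDerivAt (fun x => (arctan x - x / (x ^ 2 + 1)) / 2) (x ^ 2 / (x ^ 2 + 1) ^ 2) x := by
  have hfrac : HasDerivAt (fun x : ℝ => x / (x ^ 2 + 1))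
      ((1 * (x ^ 2 + 1) - x * (2 * x)) / (x ^ 2 + 1) ^ 2) x :=
    (hasDerivAt_id' x).div (hasDerivAt_sq_add_one x) (by positivity)
  refine (((hasDerivAt_arctan x).sub hfrac).div_const 2).congr_deriv ?_
  field_simp
  ring

lemma hasDerivAt_antideriv_sq_div_sq_add_one_pow_three (x : ℝ) :
    HasDerivAt (fun x => arctan x / 8 + (x ^ 3 - x) / (8 * (x ^ 2 + 1) ^ 2))
      (x ^ 2 / (x ^ 2 + 1) ^ 3) x := by
  have hnum : HasDerivAt (fun x : ℝ => x ^ 3 - x) (3 * x ^ 2 - 1) x :=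
    ((hasDerivAt_pow 3 x).sub (hasDerivAt_id' x)).congr_deriv (by norm_num)
  have hden : HasDerivAt (fun x : ℝ => 8 * (x ^ 2 + 1) ^ 2) (32 * x * (x ^ 2 + 1)) x :=
    (((hasDerivAt_sq_add_one x).pow 2).const_mul 8).congr_deriv (by norm_num; ring)
  have hfrac := hnum.div hden (by positivity)
  refine (((hasDerivAt_arctan x).div_const 8).add hfrac).congr_deriv ?_
  field_simp
  ring

lemma tendsto_antideriv_sq_div_sq_add_one_sq :
    Tendsto (fun x => (arctan x - x / (x ^ 2 + 1)) / 2) atTop (𝓝 (π / 4)) := by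
  convert (tendsto_arctan_atTop.mono_right nhdsWithin_le_nhds).sub tendsto_div_sq_add_one_atTop
    |>.div_const 2 using 2
  ring

lemma tendsto_antideriv_sq_div_sq_add_one_pow_three :
    Tendsto (fun x => arctan x / 8 + (x ^ 3 - x) / (8 * (x ^ 2 + 1) ^ 2)) atTop
      (𝓝 (π / 16)) := by
  convert (tendsto_arctan_atTop.mono_right nhdsWithin_le_nhds).div_const 8
    |>.add tendsto_cube_sub_div_sq_add_one_sq_atTop using 2
  ring

lemma integrableOn_sq_div_sq_add_one_sq :
    IntegrableOn (fun x : ℝ => x ^ 2 / (x ^ 2 + 1) ^ 2) (Ioi 0) :=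
  integrableOn_Ioi_deriv_of_nonneg' (fun x _ => hasDerivAt_antideriv_sq_div_sq_add_one_sq x)
    (fun x _ => by positivity) tendsto_antideriv_sq_div_sq_add_one_sq

lemma integral_sq_div_sq_add_one_sq : ∫ x in Ioi (0 : ℝ), x ^ 2 / (x ^ 2 + 1) ^ 2 = π / 4 := by
  simpa using integral_Ioi_of_hasDerivAt_of_nonneg' (a := 0)
    (fun x _ => hasDerivAt_antideriv_sq_div_sq_add_one_sq x)
    (fun x _ => by positivity) tendsto_antideriv_sq_div_sq_add_one_sq

lemma integrableOn_sq_div_sq_add_one_pow_three :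
    IntegrableOn (fun x : ℝ => x ^ 2 / (x ^ 2 + 1) ^ 3) (Ioi 0) :=
  integrableOn_Ioi_deriv_of_nonneg' (fun x _ => hasDerivAt_antideriv_sq_div_sq_add_one_pow_three x)
    (fun x _ => by positivity) tendsto_antideriv_sq_div_sq_add_one_pow_three

lemma integral_sq_div_sq_add_one_pow_three :
    ∫ x in Ioi (0 : ℝ), x ^ 2 / (x ^ 2 + 1) ^ 3 = π / 16 := by
  simpa using integral_Ioi_of_hasDerivAt_of_nonneg' (a := 0)
    (fun x _ => hasDerivAt_antideriv_sq_div_sq_add_one_pow_three x)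
    (fun x _ => by positivity) tendsto_antideriv_sq_div_sq_add_one_pow_three

lemma tendsto_Gammab_nhdsGT_zero : Tendsto Gammab (𝓝[>] 0) (𝓝 (π / 2)) := by
  have hw : Integrable (fun ρ : ℝ => 8 * ρ ^ 2 / (ρ ^ 2 + 1) ^ 2) (volume.restrict (Ioi 0)) := by
    simpa only [mul_div_assoc] using integrableOn_sq_div_sq_add_one_sq.const_mul 8
  have hlim : (∫ ρ in Ioi 0, 8 * ρ ^ 2 / (ρ ^ 2 + 1) ^ 2) / 4 = π / 2 := by
    simp only [mul_div_assoc, integral_const_mul, integral_sq_div_sq_add_one_sq]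
    ring
  rw [← hlim]
  exact (tendsto_integral_mul_gammabKernel hw (by fun_prop) fun ρ => by positivity).congr
    fun τ => (Gammab_eq_integral_mul_gammabKernel τ).symm

lemma Gammab_le_pi_div {τ : ℝ} (hτ : 0 ≤ τ) : Gammab τ ≤ π / (2 * τ) := by
  have hw_div (ρ : ℝ) :
      8 * ρ ^ 2 / (ρ ^ 2 + 1) ^ 2 / (1 + ρ ^ 2) = 8 * (ρ ^ 2 / (ρ ^ 2 + 1) ^ 3) := by
    field_simp
    ring
  rw [Gammab_eq_integral_mul_gammabKernel]
  calc _ ≤ τ⁻¹ * ∫ ρ in Ioi 0, 8 * ρ ^ 2 / (ρ ^ 2 + 1) ^ 2 / (1 + ρ ^ 2) :=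
        integral_mul_gammabKernel_le hτ (fun ρ => by positivity) (fun ρ => by positivity)
          (by simpa only [hw_div] using integrableOn_sq_div_sq_add_one_pow_three.const_mul 8)
    _ = π / (2 * τ) := by
        simp only [hw_div, integral_const_mul, integral_sq_div_sq_add_one_pow_three]
        ring

/-- `Γ_b(τ) → π/2` as `τ → 0⁺`, and `Γ_b(τ) ≤ π/(2τ)` for all `τ > 0`. -/
theorem Gammab_limit_and_decay :
    Filter.Tendsto Gammab (nhdsWithin 0 (Set.Ioi 0)) (nhds (Real.pi / 2)) ∧
    ∀ τ : ℝ, 0 < τ → Gammab τ ≤ Real.pi / (2 * τ) :=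
  ⟨tendsto_Gammab_nhdsGT_zero, fun _ hτ => Gammab_le_pi_div hτ.le⟩
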